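/- Let γ be a positive real-valued random variable with E[|ln γ|] < ∞. Then E[log₂(1 + γ)] ≥ log₂(1 + exp(E[ln γ])). -/

import Mathlib

/-! Write `γ = exp Y` with `Y = ln γ`. The softplus function `y ↦ log (1 + exp y)` is convex
(its derivative is the increasing logistic function), so Jensen's inequality gives
`log (1 + exp E[Y]) ≤ E[log (1 + γ)]`; dividing by `log 2 > 0` converts to base 2. -/

open MeasureTheory Real

lemma hasDerivAt_log_one_add_exp (y : ℝ) :
    HasDerivAt (fun y => log (1 + exp y)) (exp y / (1 + exp y)) y :=
  ((hasDerivAt_exp y).const_add 1).log (by positivity)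

lemma differentiable_log_one_add_exp : Differentiable ℝ fun y => log (1 + exp y) :=
  fun y => (hasDerivAt_log_one_add_exp y).differentiableAt

lemma continuous_log_one_add_exp : Continuous fun y => log (1 + exp y) :=
  differentiable_log_one_add_exp.continuous

lemma convexOn_log_one_add_exp : ConvexOn ℝ Set.univ fun y => log (1 + exp y) := by
  refine Monotone.convexOn_univ_of_deriv differentiable_log_one_add_exp ?_
  have hderiv : deriv (fun y => log (1 + exp y)) = fun y => 1 - (1 + exp y)⁻¹ := by
    funext y
    rw [(hasDerivAt_log_one_add_exp y).deriv]
    field_simp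
    ring
  rw [hderiv]
  intro a b hab
  exact sub_le_sub_left (inv_anti₀ (by positivity) (by gcongr)) 1

lemma log_one_add_exp_nonneg (y : ℝ) : 0 ≤ log (1 + exp y) :=
  log_nonneg (by linarith [exp_pos y])

lemma log_one_add_exp_le (y : ℝ) : log (1 + exp y) ≤ log 2 + |y| := by
  have hle : 1 + exp y ≤ 2 * exp |y| := by
    linarith [one_le_exp (abs_nonneg y), exp_le_exp.2 (le_abs_self y)]
  calc log (1 + exp y) ≤ log (2 * exp |y|) := log_le_log (by positivity) hle
    _ = log 2 + |y| := by rw [log_mul two_ne_zero (exp_pos _).ne', log_exp]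

lemma MeasureTheory.Integrable.log_one_add_exp {α : Type*} [MeasurableSpace α] {μ : Measure α}
    [IsFiniteMeasure μ] {f : α → ℝ} (hf : Integrable f μ) :
    Integrable (fun x => log (1 + exp (f x))) μ := by
  refine ((integrable_const (log 2)).add hf.abs).mono'
    (continuous_log_one_add_exp.comp_aestronglyMeasurable hf.1) (Filter.Eventually.of_forall ?_)
  intro x
  rw [Real.norm_of_nonneg (log_one_add_exp_nonneg _)]
  exact log_one_add_exp_le _

lemma log_one_add_exp_integral_le {α : Type*} [MeasurableSpace α] {μ : Measure α}
    [IsProbabilityMeasure μ] {f : α → ℝ} (hf : Integrable f μ) :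
    log (1 + exp (∫ x, f x ∂μ)) ≤ ∫ x, log (1 + exp (f x)) ∂μ :=
  convexOn_log_one_add_exp.map_integral_le continuous_log_one_add_exp.continuousOn isClosed_univ
    (by simp) hf hf.log_one_add_exp

theorem log2_one_add_exp_integral_log_le_general
    {Ω : Type*} [MeasureSpace Ω] [IsProbabilityMeasure (volume : Measure Ω)]
    (γ : Ω → ℝ)
    (hpos : ∀ᵐ ω, 0 < γ ω)
    (hlog : Integrable (fun ω => Real.log (γ ω))) :
    Real.log (1 + Real.exp (∫ ω, Real.log (γ ω))) / Real.log 2 ≤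
      ∫ ω, Real.log (1 + γ ω) / Real.log 2 := by
  have hexp_log :
      (fun ω => log (1 + exp (log (γ ω)))) =ᵐ[volume] fun ω => log (1 + γ ω) := by
    filter_upwards [hpos] with ω hω
    rw [exp_log hω]
  rw [integral_div, ← integral_congr_ae hexp_log]
  gcongr
  exact log_one_add_exp_integral_le hlog

/-- Jensen lower bound: `E[log₂(1+γ)] ≥ log₂(1 + exp(E[ln γ]))`. -/
theorem log2_one_add_exp_integral_log_le
    {Ω : Type*} [MeasureSpace Ω] [IsProbabilityMeasure (volume : Measure Ω)]
    (γ : Ω → ℝ) (hmeas : Measurable γ)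
    (hpos : ∀ᵐ ω, 0 < γ ω)
    (hlog : Integrable (fun ω => Real.log (γ ω)))
    (hint : Integrable (fun ω => Real.log (1 + γ ω))) :
    Real.log (1 + Real.exp (∫ ω, Real.log (γ ω))) / Real.log 2 ≤
      ∫ ω, Real.log (1 + γ ω) / Real.log 2 :=
  log2_one_add_exp_integral_log_le_general γ hpos hlog
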